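/- arXiv:2002.03432 — 3 statements merged into one kernel-verified Lean document; each statement's English description precedes it below -/
import Mathlib

section
/- Let L : ℝⁿ → ℝ be continuously differentiable, with parameters partitioned into L groups W = (W₁,...,W_L) and perturbation ΔW = (ΔW₁,...,ΔW_L). Writing g_l(W) for the gradient of L with respect to the l-th group, and cos θ_l := ⟨-g_l(W), ΔW_l⟩ / (‖g_l(W)‖·‖ΔW_l‖) (with g_l(W) ≠ 0, ΔW_l ≠ 0), we have: L(W+ΔW) - L(W) ≤ - Σ_{l=1}^L ‖g_l(W)‖ ‖ΔW_l‖ [cos θ_l - max_{t∈[0,1]} ‖g_l(W+tΔW) - g_l(W)‖ / ‖g_l(W)‖]. -/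
/-!
Along the segment `s ↦ W + s • ΔW` the loss has derivative
`⟪∇f (W + s • ΔW), ΔW⟫ = ∑ l, ⟪g_l (W + s • ΔW), ΔW_l⟫`. Splitting
`g_l (W + s • ΔW) = g_l W + (g_l (W + s • ΔW) - g_l W)` and applying Cauchy–Schwarz to the second
term bounds each summand by `⟪g_l W, ΔW_l⟫ + ‖ΔW_l‖ ‖g_l W‖ T_l`, where `T_l` is the supremum in the
statement (finite because the gradient is continuous). Integrating this bound over `[0, 1]`, here in
the form of the mean value inequality, and writing `⟪-g_l W, ΔW_l⟫ = ‖g_l W‖ ‖ΔW_l‖ cos θ_l` gives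
the claim.
-/

open Finset Set InnerProductGeometry

variable {E : Type*} [NormedAddCommGroup E] [InnerProductSpace ℝ E] [CompleteSpace E]

theorem ContDiff.continuous_gradient {f : E → ℝ} (hf : ContDiff ℝ 1 f) :
    Continuous (gradient f) :=
  (InnerProductSpace.toDual ℝ E).symm.continuous.comp (hf.continuous_fderiv one_ne_zero)

theorem hasDerivAt_comp_add_smul {f : E → ℝ} (hf : Differentiable ℝ f) (x v : E) (t : ℝ) :
    HasDerivAt (fun s : ℝ => f (x + s • v)) (inner ℝ (gradient f (x + t • v)) v) t := by
  have hline : HasDerivAt (fun s : ℝ => x + s • v) v t := by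
    simpa using ((hasDerivAt_id t).smul_const v).const_add x
  rw [inner_gradient_left]
  exact (hf _).hasFDerivAt.comp_hasDerivAt t hline

theorem sub_le_of_inner_gradient_le {f : E → ℝ} (hf : Differentiable ℝ f) {x v : E} {C : ℝ}
    (hC : ∀ t ∈ Icc (0 : ℝ) 1, inner ℝ (gradient f (x + t • v)) v ≤ C) :
    f (x + v) - f x ≤ C := by
  have hφ := hasDerivAt_comp_add_smul hf x v
  have := (convex_Icc (0 : ℝ) 1).image_sub_le_mul_sub_of_deriv_le
    (fun t _ => (hφ t).continuousAt.continuousWithinAt)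
    (fun t _ => (hφ t).differentiableAt.differentiableWithinAt)
    (fun t ht => (hφ t).deriv ▸ hC t (interior_subset ht)) 0 (by simp) 1 (by simp) zero_le_one
  simpa using this

theorem Continuous.le_iSup_Icc {φ : ℝ → ℝ} (hφ : Continuous φ) {a b t : ℝ} (ht : t ∈ Icc a b) :
    φ t ≤ ⨆ s : Icc a b, φ s :=
  le_ciSup (isCompact_range (hφ.comp continuous_subtype_val)).bddAbove ⟨t, ht⟩

variable {F : Type*} [NormedAddCommGroup F] [InnerProductSpace ℝ F]

theorem real_inner_le_inner_add_norm_mul_norm_mul_div {a b v : F} (ha : a ≠ 0) :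
    inner ℝ b v ≤ inner ℝ a v + ‖a‖ * ‖v‖ * (‖b - a‖ / ‖a‖) := by
  have hb : inner ℝ b v = inner ℝ a v + inner ℝ (b - a) v := by rw [inner_sub_left]; ring
  have hba : ‖a‖ * ‖v‖ * (‖b - a‖ / ‖a‖) = ‖b - a‖ * ‖v‖ := by field_simp [norm_ne_zero_iff.2 ha]
  rw [hb, hba]
  gcongr
  exact real_inner_le_norm _ _

theorem norm_mul_norm_mul_div_sub (a v : F) (T : ℝ) :
    ‖a‖ * ‖v‖ * (inner ℝ (-a) v / (‖a‖ * ‖v‖) - T) = -(inner ℝ a v + ‖a‖ * ‖v‖ * T) := by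
  calc ‖a‖ * ‖v‖ * (inner ℝ (-a) v / (‖a‖ * ‖v‖) - T)
      = Real.cos (angle (-a) v) * (‖-a‖ * ‖v‖) - ‖a‖ * ‖v‖ * T := by rw [cos_angle, norm_neg]; ring
    _ = -(inner ℝ a v + ‖a‖ * ‖v‖ * T) := by
      rw [cos_angle_mul_norm_mul_norm, inner_neg_left]; ring

theorem descent_lemma_ftc_general {L : ℕ} {d : Fin L → ℕ}
    (f : PiLp 2 (fun l : Fin L => EuclideanSpace ℝ (Fin (d l))) → ℝ)
    (hf : ContDiff ℝ 1 f)
    (W ΔW : PiLp 2 (fun l : Fin L => EuclideanSpace ℝ (Fin (d l))))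
    (hg : ∀ l, gradient f W l ≠ 0) :
    f (W + ΔW) - f W ≤
      - ∑ l, ‖gradient f W l‖ * ‖ΔW l‖ *
        ((inner ℝ (-(gradient f W l)) (ΔW l) : ℝ) / (‖gradient f W l‖ * ‖ΔW l‖)
          - ⨆ t : Set.Icc (0 : ℝ) 1,
              ‖gradient f (W + (t : ℝ) • ΔW) l - gradient f W l‖ / ‖gradient f W l‖) := by
  simp only [norm_mul_norm_mul_div_sub, sum_neg_distrib, neg_neg]
  refine sub_le_of_inner_gradient_le (hf.differentiable one_ne_zero) fun t ht => ?_
  rw [PiLp.inner_apply]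
  refine sum_le_sum fun l _ => (real_inner_le_inner_add_norm_mul_norm_mul_div (hg l)).trans ?_
  have hcont : Continuous fun s : ℝ => gradient f (W + s • ΔW) l :=
    (PiLp.continuous_apply 2 _ l).comp (hf.continuous_gradient.comp (by fun_prop))
  gcongr
  exact ((hcont.sub continuous_const).norm.div_const _).le_iSup_Icc ht

/-- A descent lemma via the fundamental theorem of calculus (Lemma 1):
the parameters are partitioned into `L` groups, `g_l(W)` is the gradient of the loss
with respect to the `l`-th group, and `cos θ_l = ⟪-g_l(W), ΔW_l⟫/(‖g_l(W)‖‖ΔW_l‖)`. -/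
theorem descent_lemma_ftc {L : ℕ} {d : Fin L → ℕ}
    (f : PiLp 2 (fun l : Fin L => EuclideanSpace ℝ (Fin (d l))) → ℝ)
    (hf : ContDiff ℝ 1 f)
    (W ΔW : PiLp 2 (fun l : Fin L => EuclideanSpace ℝ (Fin (d l))))
    (hg : ∀ l, gradient f W l ≠ 0) (hΔ : ∀ l, ΔW l ≠ 0) :
    f (W + ΔW) - f W ≤
      - ∑ l, ‖gradient f W l‖ * ‖ΔW l‖ *
        ((inner ℝ (-(gradient f W l)) (ΔW l) : ℝ) / (‖gradient f W l‖ * ‖ΔW l‖)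
          - ⨆ t : Set.Icc (0 : ℝ) 1,
              ‖gradient f (W + (t : ℝ) • ΔW) l - gradient f W l‖ / ‖gradient f W l‖) :=
  descent_lemma_ftc_general f hf W ΔW hg
end

section
/- Let L : ℝⁿ → ℝ be continuously differentiable with parameters in L groups, and suppose the deep relative trust bound holds: for every group l and every perturbation ΔW, ‖g_l(W+ΔW) - g_l(W)‖/‖g_l(W)‖ ≤ ∏_{k=1}^L (1 + ‖ΔW_k‖/‖W_k‖) - 1. If a perturbation ΔW satisfies ‖ΔW_l‖/‖W_l‖ ≤ η for all l, each ΔW_l is nonzero with angle θ_l to -g_l(W), each g_l(W) ≠ 0, and η < (1 + cos θ_l)^{1/L} - 1 for all l, then L(W+ΔW) < L(W). -/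
open Finset Real InnerProductGeometry RealInnerProductSpace

/-!
Along the segment `t ↦ W + t • ΔW` the loss has derivative `⟪∇f(W + t • ΔW), ΔW⟫`, so it
suffices that every block `⟪∇_l f(W + t • ΔW), ΔW_l⟫` be negative for `t ∈ (0, 1)`. On the
segment every layer moves by at most `η` relative to `W_l`, so deep relative trust bounds the
relative change of each block gradient by `ε = (1 + η)^L - 1`, and the hypothesis on `η` gives
`ε < cos θ_l`. A gradient block that moved by less than `cos θ_l ‖g_l‖` still has
negative inner product with `ΔW_l`.
-/

lemma pow_lt_of_lt_rpow_one_div {x y : ℝ} {n : ℕ} (hn : n ≠ 0) (hx : 0 ≤ x) (hy : 0 ≤ y)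
    (h : x < y ^ ((1 : ℝ) / n)) : x ^ n < y := by
  rw [one_div, lt_rpow_inv_iff_of_pos hx hy (by positivity)] at h
  exact_mod_cast h

theorem inner_neg_of_div_norm_sub_le_of_lt_cos_angle {E : Type*} [NormedAddCommGroup E]
    [InnerProductSpace ℝ E] {g G v : E} {ε : ℝ} (hε : 0 ≤ ε) (hG : ‖G - g‖ / ‖g‖ ≤ ε)
    (hcos : ε < cos (angle (-g) v)) : ⟪G, v⟫ < 0 := by
  have hg : g ≠ 0 := by
    rintro rfl
    simp only [neg_zero, angle_zero_left, cos_pi_div_two] at hcos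
    linarith
  have hv : v ≠ 0 := by
    rintro rfl
    simp only [angle_zero_right, cos_pi_div_two] at hcos
    linarith
  have hGg : ‖G - g‖ ≤ ε * ‖g‖ := (div_le_iff₀ (norm_pos_iff.2 hg)).1 hG
  have hgv : ⟪g, v⟫ = -(cos (angle (-g) v) * (‖g‖ * ‖v‖)) := by
    rw [← norm_neg g, cos_angle_mul_norm_mul_norm, inner_neg_left, neg_neg]
  calc ⟪G, v⟫ = ⟪G - g, v⟫ + ⟪g, v⟫ := by rw [inner_sub_left]; ring
    _ ≤ ‖G - g‖ * ‖v‖ + ⟪g, v⟫ := add_le_add_left (real_inner_le_norm _ _) _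
    _ ≤ (ε - cos (angle (-g) v)) * (‖g‖ * ‖v‖) := by
      rw [hgv]; nlinarith [mul_le_mul_of_nonneg_right hGg (norm_nonneg v)]
    _ < 0 := mul_neg_of_neg_of_pos (by linarith) (by positivity)

theorem apply_add_lt_of_inner_gradient_neg {E : Type*} [NormedAddCommGroup E]
    [InnerProductSpace ℝ E] [CompleteSpace E] {f : E → ℝ} (hf : Differentiable ℝ f) {x v : E}
    (h : ∀ t ∈ Set.Ioo (0 : ℝ) 1, ⟪gradient f (x + t • v), v⟫ < 0) : f (x + v) < f x := by
  have hderiv (t : ℝ) :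
      HasDerivAt (fun s : ℝ => f (x + s • v)) ⟪gradient f (x + t • v), v⟫ t := by
    have hline : HasDerivAt (fun s : ℝ => x + s • v) v t := by
      simpa using ((hasDerivAt_id t).smul_const v).const_add x
    exact (hf _).hasGradientAt.hasFDerivAt.comp_hasDerivAt t hline
  have hanti : StrictAntiOn (fun s : ℝ => f (x + s • v)) (Set.Icc 0 1) :=
    strictAntiOn_of_deriv_neg (convex_Icc 0 1)
      (continuous_iff_continuousAt.2 fun t => (hderiv t).continuousAt).continuousOn
      fun t ht => by rw [interior_Icc] at ht; rw [(hderiv t).deriv]; exact h t ht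
  simpa using hanti (Set.left_mem_Icc.2 zero_le_one) (Set.right_mem_Icc.2 zero_le_one) one_pos

theorem descent_under_deep_relative_trust_general {L : ℕ} (hL : 0 < L) {d : Fin L → ℕ}
    (f : PiLp 2 (fun l : Fin L => EuclideanSpace ℝ (Fin (d l))) → ℝ)
    (hf : ContDiff ℝ 1 f)
    (W ΔW : PiLp 2 (fun l : Fin L => EuclideanSpace ℝ (Fin (d l))))
    (η : ℝ)
    (htrust : ∀ (ΔV : PiLp 2 (fun l : Fin L => EuclideanSpace ℝ (Fin (d l)))) (l : Fin L),
      ‖gradient f (W + ΔV) l - gradient f W l‖ / ‖gradient f W l‖ ≤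
        (∏ k, (1 + ‖ΔV k‖ / ‖W k‖)) - 1)
    (hsize : ∀ l, ‖ΔW l‖ / ‖W l‖ ≤ η)
    (hη : ∀ l, η <
      (1 + (inner ℝ (-(gradient f W l)) (ΔW l) : ℝ) / (‖gradient f W l‖ * ‖ΔW l‖))
        ^ ((1 : ℝ) / L) - 1) :
    f (W + ΔW) < f W := by
  have hη0 : 0 ≤ η := (div_nonneg (norm_nonneg _) (norm_nonneg _)).trans (hsize ⟨0, hL⟩)
  have hε : 0 ≤ (1 + η) ^ L - 1 := sub_nonneg.2 (one_le_pow₀ (by linarith))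
  have hcos (l : Fin L) : (1 + η) ^ L - 1 < cos (angle (-(gradient f W l)) (ΔW l)) := by
    have h := hη l
    rw [← norm_neg (gradient f W l), ← cos_angle] at h
    have := pow_lt_of_lt_rpow_one_div hL.ne' (x := 1 + η)
      (y := 1 + cos (angle (-(gradient f W l)) (ΔW l))) (by linarith)
      (by linarith [neg_one_le_cos (angle (-(gradient f W l)) (ΔW l))]) (by linarith)
    linarith
  have hprod (t : ℝ) (ht : t ∈ Set.Ioo (0 : ℝ) 1) :
      ∏ k, (1 + ‖(t • ΔW) k‖ / ‖W k‖) ≤ (1 + η) ^ L := by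
    calc ∏ k, (1 + ‖(t • ΔW) k‖ / ‖W k‖) ≤ ∏ _k : Fin L, (1 + η) := by
          refine prod_le_prod (fun k _ => by positivity) fun k _ => ?_
          have hk : ‖(t • ΔW) k‖ / ‖W k‖ = t * (‖ΔW k‖ / ‖W k‖) := by
            rw [PiLp.smul_apply, norm_smul, norm_of_nonneg ht.1.le, mul_div_assoc]
          have := mul_le_of_le_one_left (div_nonneg (norm_nonneg (ΔW k)) (norm_nonneg (W k)))
            ht.2.le
          linarith [hsize k]
      _ = (1 + η) ^ L := by simp
  refine apply_add_lt_of_inner_gradient_neg (hf.differentiable one_ne_zero) fun t ht => ?_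
  rw [PiLp.inner_apply]
  exact sum_neg (fun l _ => inner_neg_of_div_norm_sub_le_of_lt_cos_angle hε
    ((htrust _ l).trans (by linarith [hprod t ht])) (hcos l)) ⟨⟨0, hL⟩, mem_univ _⟩

/-- Descent under deep relative trust (Lemma 2): if the gradient breakdown obeys the
deep relative trust bound, the perturbation has layerwise relative size at most `η`, and
`η < (1 + cos θ_l)^{1/L} - 1` for every layer, then the loss strictly decreases. -/
theorem descent_under_deep_relative_trust {L : ℕ} (hL : 0 < L) {d : Fin L → ℕ}
    (f : PiLp 2 (fun l : Fin L => EuclideanSpace ℝ (Fin (d l))) → ℝ)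
    (hf : ContDiff ℝ 1 f)
    (W ΔW : PiLp 2 (fun l : Fin L => EuclideanSpace ℝ (Fin (d l))))
    (η : ℝ)
    (hW : ∀ l, W l ≠ 0)
    (hg : ∀ l, gradient f W l ≠ 0)
    (hΔ : ∀ l, ΔW l ≠ 0)
    (htrust : ∀ (ΔV : PiLp 2 (fun l : Fin L => EuclideanSpace ℝ (Fin (d l)))) (l : Fin L),
      ‖gradient f (W + ΔV) l - gradient f W l‖ / ‖gradient f W l‖ ≤
        (∏ k, (1 + ‖ΔV k‖ / ‖W k‖)) - 1)
    (hsize : ∀ l, ‖ΔW l‖ / ‖W l‖ ≤ η)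
    (hη : ∀ l, η <
      (1 + (inner ℝ (-(gradient f W l)) (ΔW l) : ℝ) / (‖gradient f W l‖ * ‖ΔW l‖))
        ^ ((1 : ℝ) / L) - 1) :
    f (W + ΔW) < f W :=
  descent_under_deep_relative_trust_general hL f hf W ΔW η htrust hsize hη
end

section
/- Consider an L-layer multilayer perceptron f(x) = φ(W_L φ(W_{L-1} ⋯ φ(W_1 x))) and a perturbed network f̃ with weights W̃_l = W_l + ΔW_l. Suppose φ satisfies α‖x‖₂ ≤ ‖φ(x)‖₂ ≤ β‖x‖₂ and α‖x-y‖₂ ≤ ‖φ(x)-φ(y)‖₂ ≤ β‖x-y‖₂ for all x, y, with 0 < α ≤ β, and all matrices W_l, W̃_l, ΔW_l have condition number at most κ with smallest singular value positive. Then for all nonzero x with f(x) ≠ 0: ‖f̃(x) - f(x)‖₂ / ‖f(x)‖₂ ≤ (β κ²/α)^L · [∏_{k=1}^L (1 + ‖ΔW_k‖_F/‖W_k‖_F) - 1]. -/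
/-!
Write `h_l`, `g_l` for the hidden layers of the two networks and `t_l = ‖ΔW_l‖_F / ‖W_l‖_F`.
If `s` is the smallest singular value of `W_l`, the condition-number bounds give
`‖W_l‖₂ ≤ κ s` and, comparing operator and Frobenius norms column by column,
`‖ΔW_l‖₂ ≤ κ² s t_l`. Splitting
`(W_l + ΔW_l) g_l - W_l h_l = W_l (g_l - h_l) + ΔW_l (g_l - h_l) + ΔW_l h_l`
and using that `φ` is `β`-Lipschitz and expands norms by at least `α`, a relative error
`‖g_l - h_l‖ ≤ e ‖h_l‖` propagates to `(βκ²/α)((1 + t_l) e + t_l)` at the next layer,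
and `e_l = (βκ²/α)^l (∏_{k<l} (1 + t_k) - 1)` dominates this recursion.
-/

open Finset

/-- Euclidean norm of a vector. -/
noncomputable def vecEnorm {m : ℕ} (v : Fin m → ℝ) : ℝ :=
  Real.sqrt (∑ i, v i ^ 2)

/-- Frobenius norm of a matrix. -/
noncomputable def frob {a b : ℕ} (M : Matrix (Fin a) (Fin b) ℝ) : ℝ :=
  Real.sqrt (∑ i, ∑ j, M i j ^ 2)

/-- `M` has all singular values positive and condition number (ratio of largest to
smallest singular value) at most `κ`. -/
def HasCondLE {a b : ℕ} (M : Matrix (Fin a) (Fin b) ℝ) (κ : ℝ) : Prop :=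
  ∃ σmin σmax : ℝ, 0 < σmin ∧ σmax ≤ κ * σmin ∧
    ∀ v : Fin b → ℝ, σmin * vecEnorm v ≤ vecEnorm (M.mulVec v) ∧
      vecEnorm (M.mulVec v) ≤ σmax * vecEnorm v

/-- Hidden layers of a multilayer perceptron:
`h 0 x = x`, `h (l+1) x = φ(W l · h l x)` with `φ` applied elementwise. -/
noncomputable def mlpHidden (φ : ℝ → ℝ) (n : ℕ → ℕ)
    (W : ∀ l : ℕ, Matrix (Fin (n (l + 1))) (Fin (n l)) ℝ)
    (x : Fin (n 0) → ℝ) : ∀ l : ℕ, Fin (n l) → ℝ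
  | 0 => x
  | l + 1 => fun i => φ ((W l).mulVec (mlpHidden φ n W x l) i)

open Matrix

section Norms

variable {m : ℕ}

lemma vecEnorm_eq_norm (v : Fin m → ℝ) : vecEnorm v = ‖WithLp.toLp 2 v‖ := by
  simp [EuclideanSpace.norm_eq, vecEnorm]

lemma vecEnorm_nonneg (v : Fin m → ℝ) : 0 ≤ vecEnorm v := Real.sqrt_nonneg _

@[simp]
lemma vecEnorm_zero : vecEnorm (0 : Fin m → ℝ) = 0 := by
  simp [vecEnorm]

lemma vecEnorm_pos {v : Fin m → ℝ} (hv : v ≠ 0) : 0 < vecEnorm v := by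
  rwa [vecEnorm_eq_norm, norm_pos_iff, Ne, WithLp.toLp_eq_zero]

lemma vecEnorm_add_le (u v : Fin m → ℝ) : vecEnorm (u + v) ≤ vecEnorm u + vecEnorm v := by
  simpa only [vecEnorm_eq_norm, WithLp.toLp_add] using norm_add_le _ _

lemma vecEnorm_smul (c : ℝ) (v : Fin m → ℝ) : vecEnorm (c • v) = |c| * vecEnorm v := by
  rw [vecEnorm_eq_norm, vecEnorm_eq_norm, WithLp.toLp_smul, norm_smul, Real.norm_eq_abs]

lemma vecEnorm_le_of_abs_le {u v : Fin m → ℝ} (h : ∀ i, |u i| ≤ |v i|) :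
    vecEnorm u ≤ vecEnorm v :=
  Real.sqrt_le_sqrt <| sum_le_sum fun i _ => sq_le_sq.mpr (h i)

lemma vecEnorm_single_one (j : Fin m) : vecEnorm (Pi.single j 1) = 1 := by
  simp [vecEnorm, Pi.single_apply]

lemma frob_eq_sqrt_sum_vecEnorm_col_sq {a b : ℕ} (M : Matrix (Fin a) (Fin b) ℝ) :
    frob M = Real.sqrt (∑ j, vecEnorm (M.col j) ^ 2) := by
  simp only [frob, vecEnorm, col_apply, Real.sq_sqrt (sum_nonneg fun _ _ => sq_nonneg _)]
  rw [sum_comm]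

end Norms

section Activation

variable {m : ℕ} {φ : ℝ → ℝ}

lemma vecEnorm_comp_sub_comp_le {β : ℝ} (hβ : 0 ≤ β) (hφ : ∀ x y, |φ x - φ y| ≤ β * |x - y|)
    (u v : Fin m → ℝ) : vecEnorm (φ ∘ u - φ ∘ v) ≤ β * vecEnorm (u - v) := by
  rw [← abs_of_nonneg hβ, ← vecEnorm_smul]
  refine vecEnorm_le_of_abs_le fun i => ?_
  simpa [abs_mul, abs_of_nonneg hβ] using hφ (u i) (v i)

lemma mul_vecEnorm_le_vecEnorm_comp {α : ℝ} (hα : 0 ≤ α) (hφ : ∀ x, α * |x| ≤ |φ x|)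
    (u : Fin m → ℝ) : α * vecEnorm u ≤ vecEnorm (φ ∘ u) := by
  rw [← abs_of_nonneg hα, ← vecEnorm_smul]
  refine vecEnorm_le_of_abs_le fun i => ?_
  simpa [abs_mul, abs_of_nonneg hα] using hφ (u i)

lemma comp_ne_zero {α : ℝ} (hα : 0 < α) (hφ : ∀ x, α * |x| ≤ |φ x|) {u : Fin m → ℝ}
    (hu : u ≠ 0) : φ ∘ u ≠ 0 := by
  obtain ⟨i, hi⟩ := Function.ne_iff.mp hu
  exact Function.ne_iff.mpr ⟨i, abs_pos.mp ((mul_pos hα (abs_pos.mpr hi)).trans_le (hφ (u i)))⟩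

end Activation

section Matrix

variable {a b : ℕ}

lemma frob_nonneg (M : Matrix (Fin a) (Fin b) ℝ) : 0 ≤ frob M := Real.sqrt_nonneg _

lemma sqrt_mul_le_frob {M : Matrix (Fin a) (Fin b) ℝ} {σ : ℝ} (hσ : 0 ≤ σ)
    (h : ∀ v, σ * vecEnorm v ≤ vecEnorm (M *ᵥ v)) : Real.sqrt b * σ ≤ frob M := by
  have hcol (j : Fin b) : σ ≤ vecEnorm (M.col j) := by
    simpa [vecEnorm_single_one, mulVec_single_one] using h (Pi.single j 1)
  rw [frob_eq_sqrt_sum_vecEnorm_col_sq, ← Real.sqrt_sq hσ, ← Real.sqrt_mul (Nat.cast_nonneg _)]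
  refine Real.sqrt_le_sqrt ?_
  calc (b : ℝ) * σ ^ 2 = ∑ _j : Fin b, σ ^ 2 := by simp
    _ ≤ _ := sum_le_sum fun j _ => pow_le_pow_left₀ hσ (hcol j) 2

lemma frob_le_sqrt_mul {M : Matrix (Fin a) (Fin b) ℝ} {σ : ℝ} (hσ : 0 ≤ σ)
    (h : ∀ v, vecEnorm (M *ᵥ v) ≤ σ * vecEnorm v) : frob M ≤ Real.sqrt b * σ := by
  have hcol (j : Fin b) : vecEnorm (M.col j) ≤ σ := by
    simpa [vecEnorm_single_one, mulVec_single_one] using h (Pi.single j 1)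
  rw [frob_eq_sqrt_sum_vecEnorm_col_sq, ← Real.sqrt_sq hσ, ← Real.sqrt_mul (Nat.cast_nonneg _)]
  refine Real.sqrt_le_sqrt ?_
  calc _ ≤ ∑ _j : Fin b, σ ^ 2 :=
        sum_le_sum fun j _ => pow_le_pow_left₀ (vecEnorm_nonneg _) (hcol j) 2
    _ = (b : ℝ) * σ ^ 2 := by simp

lemma le_of_forall_mul_vecEnorm_le_vecEnorm_mulVec {M : Matrix (Fin a) (Fin b) ℝ} {σ σ' : ℝ}
    (hb : 0 < b)
    (h : ∀ v, σ * vecEnorm v ≤ vecEnorm (M *ᵥ v) ∧ vecEnorm (M *ᵥ v) ≤ σ' * vecEnorm v) :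
    σ ≤ σ' := by
  have := h (Pi.single ⟨0, hb⟩ 1)
  rw [vecEnorm_single_one, mul_one, mul_one] at this
  exact this.1.trans this.2

variable {κ : ℝ}

lemma HasCondLE.one_le {M : Matrix (Fin a) (Fin b) ℝ} (hM : HasCondLE M κ) (hb : 0 < b) :
    1 ≤ κ := by
  obtain ⟨s, S, hs, hS, hMv⟩ := hM
  exact (le_mul_iff_one_le_left hs).mp
    ((le_of_forall_mul_vecEnorm_le_vecEnorm_mulVec hb hMv).trans hS)

lemma HasCondLE.mulVec_ne_zero {M : Matrix (Fin a) (Fin b) ℝ} (hM : HasCondLE M κ)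
    {u : Fin b → ℝ} (hu : u ≠ 0) : M *ᵥ u ≠ 0 := by
  obtain ⟨s, _, hs, -, hMv⟩ := hM
  intro h
  have := (hMv u).1
  rw [h, vecEnorm_zero] at this
  exact (mul_pos hs (vecEnorm_pos hu)).not_ge this

/-- `‖ΔM‖₂ ≤ κ σ_min(ΔM) ≤ κ ‖ΔM‖_F / √b`, while `‖M‖_F ≤ √b σ_max(M) ≤ √b κ σ_min(M)`. -/
lemma HasCondLE.exists_bounds_of_perturbation {M ΔM : Matrix (Fin a) (Fin b) ℝ}
    (hM : HasCondLE M κ) (hΔ : HasCondLE ΔM κ) (hb : 0 < b) :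
    ∃ s > 0, ∀ v, s * vecEnorm v ≤ vecEnorm (M *ᵥ v) ∧
      vecEnorm (M *ᵥ v) ≤ κ * s * vecEnorm v ∧
      vecEnorm (ΔM *ᵥ v) ≤ κ ^ 2 * s * (frob ΔM / frob M) * vecEnorm v := by
  have hκ := hM.one_le hb
  obtain ⟨s, S, hs, hSs, hMv⟩ := hM
  obtain ⟨d, D, hd, hDd, hΔv⟩ := hΔ
  have hS : 0 ≤ S := hs.le.trans (le_of_forall_mul_vecEnorm_le_vecEnorm_mulVec hb hMv)
  have hfrobM : frob M ≤ Real.sqrt b * (κ * s) :=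
    (frob_le_sqrt_mul hS fun v => (hMv v).2).trans (by gcongr)
  have hfrobM_pos : 0 < frob M :=
    (mul_pos (Real.sqrt_pos.mpr (Nat.cast_pos.mpr hb)) hs).trans_le
      (sqrt_mul_le_frob hs.le fun v => (hMv v).1)
  have hfrobΔ : Real.sqrt b * d ≤ frob ΔM := sqrt_mul_le_frob hd.le fun v => (hΔv v).1
  have hD : D ≤ κ ^ 2 * s * (frob ΔM / frob M) := by
    rw [← mul_div_assoc, le_div_iff₀ hfrobM_pos]
    calc D * frob M ≤ κ * d * (Real.sqrt b * (κ * s)) := by gcongr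
      _ = κ ^ 2 * s * (Real.sqrt b * d) := by ring
      _ ≤ κ ^ 2 * s * frob ΔM := by gcongr
  exact ⟨s, hs, fun v => ⟨(hMv v).1,
    (hMv v).2.trans (mul_le_mul_of_nonneg_right hSs (vecEnorm_nonneg v)),
    (hΔv v).2.trans (mul_le_mul_of_nonneg_right hD (vecEnorm_nonneg v))⟩⟩

end Matrix

lemma vecEnorm_layer_sub_le {a b : ℕ} {φ : ℝ → ℝ} {α β κ e : ℝ} (hα : 0 < α) (hβ : 0 ≤ β)
    (hφ1 : ∀ x, α * |x| ≤ |φ x|) (hφ2 : ∀ x y, |φ x - φ y| ≤ β * |x - y|)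
    {M ΔM : Matrix (Fin a) (Fin b) ℝ} (hM : HasCondLE M κ) (hΔ : HasCondLE ΔM κ)
    {u v : Fin b → ℝ} (hu : u ≠ 0) (he : vecEnorm (v - u) ≤ e * vecEnorm u) :
    vecEnorm (φ ∘ ((M + ΔM) *ᵥ v) - φ ∘ (M *ᵥ u)) ≤
      β * κ ^ 2 / α * ((1 + frob ΔM / frob M) * e + frob ΔM / frob M) *
        vecEnorm (φ ∘ (M *ᵥ u)) := by
  obtain ⟨i, -⟩ := Function.ne_iff.mp hu
  have hκ := hM.one_le i.pos
  obtain ⟨s, hs, hMv⟩ := hM.exists_bounds_of_perturbation hΔ i.pos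
  set t := frob ΔM / frob M
  have ht : 0 ≤ t := div_nonneg (frob_nonneg _) (frob_nonneg _)
  set N := vecEnorm u
  set D := vecEnorm (v - u)
  have hN : 0 < N := vecEnorm_pos hu
  have hD : 0 ≤ D := vecEnorm_nonneg _
  have he0 : 0 ≤ e := nonneg_of_mul_nonneg_left (hD.trans he) hN
  have hlow : α * (s * N) ≤ vecEnorm (φ ∘ (M *ᵥ u)) :=
    (mul_le_mul_of_nonneg_left (hMv u).1 hα.le).trans (mul_vecEnorm_le_vecEnorm_comp hα.le hφ1 _)
  have hpre : vecEnorm ((M + ΔM) *ᵥ v - M *ᵥ u) ≤ κ ^ 2 * s * ((1 + t) * D + t * N) := by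
    have hsplit : (M + ΔM) *ᵥ v - M *ᵥ u = M *ᵥ (v - u) + ΔM *ᵥ (v - u) + ΔM *ᵥ u := by
      simp only [add_mulVec, mulVec_sub]
      abel
    calc _ ≤ vecEnorm (M *ᵥ (v - u)) + vecEnorm (ΔM *ᵥ (v - u)) + vecEnorm (ΔM *ᵥ u) := by
          rw [hsplit]
          exact (vecEnorm_add_le _ _).trans (add_le_add_left (vecEnorm_add_le _ _) _)
      _ ≤ κ * s * D + κ ^ 2 * s * t * D + κ ^ 2 * s * t * N :=
          add_le_add (add_le_add (hMv _).2.1 (hMv _).2.2) (hMv _).2.2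
      _ ≤ κ ^ 2 * s * ((1 + t) * D + t * N) := by
          have hκκ : κ ≤ κ ^ 2 := by nlinarith
          linarith [mul_le_mul_of_nonneg_right hκκ (mul_nonneg hs.le hD)]
  calc _ ≤ β * vecEnorm ((M + ΔM) *ᵥ v - M *ᵥ u) := vecEnorm_comp_sub_comp_le hβ hφ2 _ _
    _ ≤ β * (κ ^ 2 * s * ((1 + t) * (e * N) + t * N)) := by gcongr; exact hpre.trans (by gcongr)
    _ = β * κ ^ 2 / α * ((1 + t) * e + t) * (α * (s * N)) := by field_simp
    _ ≤ _ := by gcongr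

noncomputable def relErrBound (c : ℝ) (t : ℕ → ℝ) (l : ℕ) : ℝ :=
  c ^ l * ((∏ k ∈ range l, (1 + t k)) - 1)

@[simp]
lemma relErrBound_zero (c : ℝ) (t : ℕ → ℝ) : relErrBound c t 0 = 0 := by
  simp [relErrBound]

lemma mul_relErrBound_le_relErrBound_succ {c : ℝ} {t : ℕ → ℝ} (hc : 1 ≤ c) (l : ℕ)
    (ht : 0 ≤ t l) :
    c * ((1 + t l) * relErrBound c t l + t l) ≤ relErrBound c t (l + 1) := by
  have hcl : t l ≤ c ^ l * t l := le_mul_of_one_le_left ht (one_le_pow₀ hc)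
  simp only [relErrBound, prod_range_succ, pow_succ]
  nlinarith

theorem mlpHidden_ne_zero_and_sub_le {L : ℕ} {n : ℕ → ℕ} {φ : ℝ → ℝ} {α β κ : ℝ}
    (hα : 0 < α) (hαβ : α ≤ β)
    (hφ1 : ∀ x, α * |x| ≤ |φ x|) (hφ2 : ∀ x y, |φ x - φ y| ≤ β * |x - y|)
    {W ΔW : ∀ l : ℕ, Matrix (Fin (n (l + 1))) (Fin (n l)) ℝ}
    (hcond : ∀ l < L, HasCondLE (W l) κ ∧ HasCondLE (ΔW l) κ)
    {x : Fin (n 0) → ℝ} (hx : x ≠ 0) :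
    ∀ l ≤ L, mlpHidden φ n W x l ≠ 0 ∧
      vecEnorm (mlpHidden φ n (fun l => W l + ΔW l) x l - mlpHidden φ n W x l) ≤
        relErrBound (β * κ ^ 2 / α) (fun k => frob (ΔW k) / frob (W k)) l *
          vecEnorm (mlpHidden φ n W x l) := by
  intro l
  induction l with
  | zero => simp [mlpHidden, hx]
  | succ l ih =>
    intro hl
    obtain ⟨hne, hle⟩ := ih (by omega)
    obtain ⟨hW, hΔ⟩ := hcond l (by omega)
    obtain ⟨i, -⟩ := Function.ne_iff.mp hne
    have hc : 1 ≤ β * κ ^ 2 / α := by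
      rw [le_div_iff₀ hα, one_mul]
      exact hαβ.trans (le_mul_of_one_le_right (hα.le.trans hαβ) (one_le_pow₀ (hW.one_le i.pos)))
    refine ⟨comp_ne_zero hα hφ1 (hW.mulVec_ne_zero hne), ?_⟩
    have hstep := mul_relErrBound_le_relErrBound_succ
      (t := fun k => frob (ΔW k) / frob (W k)) hc l (div_nonneg (frob_nonneg _) (frob_nonneg _))
    exact (vecEnorm_layer_sub_le hα (hα.le.trans hαβ) hφ1 hφ2 hW hΔ hne hle).trans
      (mul_le_mul_of_nonneg_right hstep (vecEnorm_nonneg _))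

theorem mlp_relative_functional_difference_general
    (L : ℕ) (n : ℕ → ℕ) (φ : ℝ → ℝ) (α β κ : ℝ)
    (hα : 0 < α) (hαβ : α ≤ β)
    (hφ1 : ∀ x : ℝ, α * |x| ≤ |φ x| ∧ |φ x| ≤ β * |x|)
    (hφ2 : ∀ x y : ℝ, α * |x - y| ≤ |φ x - φ y| ∧ |φ x - φ y| ≤ β * |x - y|)
    (W ΔW : ∀ l : ℕ, Matrix (Fin (n (l + 1))) (Fin (n l)) ℝ)
    (hcond : ∀ l < L, HasCondLE (W l) κ ∧ HasCondLE (W l + ΔW l) κ ∧ HasCondLE (ΔW l) κ)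
    (x : Fin (n 0) → ℝ) (hx : x ≠ 0) :
    vecEnorm (mlpHidden φ n (fun l => W l + ΔW l) x L - mlpHidden φ n W x L) /
        vecEnorm (mlpHidden φ n W x L) ≤
      (β * κ ^ 2 / α) ^ L *
        ((∏ k ∈ Finset.range L, (1 + frob (ΔW k) / frob (W k))) - 1) := by
  obtain ⟨hne, hle⟩ := mlpHidden_ne_zero_and_sub_le hα hαβ (fun x => (hφ1 x).1)
    (fun x y => (hφ2 x y).2) (fun l hl => ⟨(hcond l hl).1, (hcond l hl).2.2⟩) hx L le_rfl
  exact (div_le_iff₀ (vecEnorm_pos hne)).mpr hle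

/-- Theorem 1(a): relative functional difference of a multilayer perceptron. -/
theorem mlp_relative_functional_difference
    (L : ℕ) (hL : 0 < L) (n : ℕ → ℕ) (φ : ℝ → ℝ) (α β κ : ℝ)
    (hα : 0 < α) (hαβ : α ≤ β)
    (hφ1 : ∀ x : ℝ, α * |x| ≤ |φ x| ∧ |φ x| ≤ β * |x|)
    (hφ2 : ∀ x y : ℝ, α * |x - y| ≤ |φ x - φ y| ∧ |φ x - φ y| ≤ β * |x - y|)
    (W ΔW : ∀ l : ℕ, Matrix (Fin (n (l + 1))) (Fin (n l)) ℝ)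
    (hcond : ∀ l < L, HasCondLE (W l) κ ∧ HasCondLE (W l + ΔW l) κ ∧ HasCondLE (ΔW l) κ)
    (x : Fin (n 0) → ℝ) (hx : x ≠ 0) (hfx : mlpHidden φ n W x L ≠ 0) :
    vecEnorm (mlpHidden φ n (fun l => W l + ΔW l) x L - mlpHidden φ n W x L) /
        vecEnorm (mlpHidden φ n W x L) ≤
      (β * κ ^ 2 / α) ^ L *
        ((∏ k ∈ Finset.range L, (1 + frob (ΔW k) / frob (W k))) - 1) :=
  mlp_relative_functional_difference_general L n φ α β κ hα hαβ hφ1 hφ2 W ΔW hcond x hx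
end
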